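/- Suppose for each i ∈ {1,...,I} the set J*_i maximizes total weight w(J') among subsets J' ⊆ J with D(J') ≤ 2^i, and let w with 0 < w < w(J) and i minimal with w(J*_i) ≥ w(J) − w. If i ≥ 2, then in any tour π' of all leaves of the star (starting and ending at the center), the total length of round trips completed with accumulated weight at least w exceeds 2^{i-1}. -/

import Mathlib

/-- Total round-trip distance of a set of leaves of the star. -/
def Dsum (N : ℕ) (d : Fin N → ℝ) (J' : Finset (Fin N)) : ℝ := ∑ v ∈ J', 2 * d v

/-- Total weight of a set of leaves. -/
def wsum (N : ℕ) (wt : Fin N → ℝ) (J' : Finset (Fin N)) : ℝ := ∑ v ∈ J', wt v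

/-- `D^σ(w')` for a star tour `σ` (see stmt_11). -/
noncomputable def Dthresh (N : ℕ) (d wt : Fin N → ℝ) (σ : Equiv.Perm (Fin N)) (w' : ℝ) : ℝ :=
  ∑ k ∈ Finset.univ.filter (fun k : Fin N => w' ≤ ∑ j ∈ Finset.Iic k, wt (σ j)),
    2 * d (σ k)

/-!
Let `A` be the leaves that `π'` visits once the accumulated weight has reached `w'`. The
leaves visited before form a prefix of the tour whose weight is below `w'`, so
`w(A) > w(J) - w'`. If the round trips to `A` had total length at most `2^{i-1}`, then `A`
would compete with `J*_{i-1}`, giving `w(J*_{i-1}) ≥ w(A) > w(J) - w'` against the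
minimality of `i`.
-/

open Finset

theorem sum_filter_sum_Iic_lt {ι : Type*} [LinearOrder ι] [Fintype ι] [LocallyFiniteOrderBot ι]
    (f : ι → ℝ) (hf : ∀ k, 0 ≤ f k) {c : ℝ} (hc : 0 < c) :
    ∑ k ∈ univ.filter (fun k => ∑ j ∈ Iic k, f j < c), f k < c := by
  set B := univ.filter (fun k => ∑ j ∈ Iic k, f j < c)
  rcases B.eq_empty_or_nonempty with hB | hB
  · simpa [hB] using hc
  have hmax : B.max' hB ∈ B := B.max'_mem hB
  have hsub : B ⊆ Iic (B.max' hB) := fun k hk => mem_Iic.mpr (B.le_max' k hk)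
  calc ∑ k ∈ B, f k ≤ ∑ k ∈ Iic (B.max' hB), f k :=
        sum_le_sum_of_subset_of_nonneg hsub fun k _ _ => hf k
    _ < c := (mem_filter.mp hmax).2

noncomputable def thresholdLeaves (N : ℕ) (wt : Fin N → ℝ) (σ : Equiv.Perm (Fin N)) (w' : ℝ) :
    Finset (Fin N) :=
  (univ.filter fun k : Fin N => w' ≤ ∑ j ∈ Iic k, wt (σ j)).map σ.toEmbedding

theorem Dsum_thresholdLeaves (N : ℕ) (d wt : Fin N → ℝ) (σ : Equiv.Perm (Fin N)) (w' : ℝ) :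
    Dsum N d (thresholdLeaves N wt σ w') = Dthresh N d wt σ w' := by
  simp only [Dsum, thresholdLeaves, sum_map, Equiv.coe_toEmbedding, Dthresh]

theorem wsum_univ_sub_lt_wsum_thresholdLeaves (N : ℕ) (wt : Fin N → ℝ) (hw : ∀ v, 0 ≤ wt v)
    (σ : Equiv.Perm (Fin N)) {w' : ℝ} (hw' : 0 < w') :
    wsum N wt univ - w' < wsum N wt (thresholdLeaves N wt σ w') := by
  have hsplit := sum_filter_add_sum_filter_not univ
    (fun k : Fin N => w' ≤ ∑ j ∈ Iic k, wt (σ j)) (fun k => wt (σ k))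
  have hprefix := sum_filter_sum_Iic_lt (fun k => wt (σ k)) (fun k => hw _) hw'
  simp only [not_le] at hsplit
  rw [Equiv.sum_comp σ wt] at hsplit
  simp only [wsum, thresholdLeaves, sum_map, Equiv.coe_toEmbedding]
  linarith

theorem stmt_19_general (N I i : ℕ) (hi2 : 2 ≤ i) (hiI : i ≤ I) (d wt : Fin N → ℝ)
    (hw : ∀ v, 0 ≤ wt v)
    (S : ℕ → Finset (Fin N))
    (hSopt : ∀ k, 1 ≤ k → k ≤ I →
      ∀ J' : Finset (Fin N), Dsum N d J' ≤ 2 ^ k → wsum N wt J' ≤ wsum N wt (S k))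
    (w' : ℝ) (hw'0 : 0 < w')
    (hmin : ∀ k, 1 ≤ k → k < i → wsum N wt (S k) < wsum N wt Finset.univ - w')
    (π' : Equiv.Perm (Fin N)) :
    (2 : ℝ) ^ (i - 1) < Dthresh N d wt π' w' := by
  by_contra! hshort
  have hA := wsum_univ_sub_lt_wsum_thresholdLeaves N wt hw π' hw'0
  have hopt := hSopt (i - 1) (by omega) (by omega) (thresholdLeaves N wt π' w')
    ((Dsum_thresholdLeaves N d wt π' w').trans_le hshort)
  linarith [hmin (i - 1) (by omega) (by omega)]

/-- If each `S k = J*_k` maximizes total weight among leaf sets of round-trip distance at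
most `2^k`, and `i ≥ 2` is minimal with `w(J*_i) ≥ w(J) − w'`, then in any tour `π'`
of all leaves the total length of round trips completed with accumulated weight at
least `w'` exceeds `2^{i-1}`. -/
theorem stmt_19 (N I i : ℕ) (hi2 : 2 ≤ i) (hiI : i ≤ I) (d wt : Fin N → ℝ)
    (hd : ∀ v, 1 ≤ d v) (hw : ∀ v, 0 ≤ wt v)
    (S : ℕ → Finset (Fin N))
    (hSfeas : ∀ k, 1 ≤ k → k ≤ I → Dsum N d (S k) ≤ 2 ^ k)
    (hSopt : ∀ k, 1 ≤ k → k ≤ I →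
      ∀ J' : Finset (Fin N), Dsum N d J' ≤ 2 ^ k → wsum N wt J' ≤ wsum N wt (S k))
    (w' : ℝ) (hw'0 : 0 < w') (hw'1 : w' < wsum N wt Finset.univ)
    (hi : wsum N wt Finset.univ - w' ≤ wsum N wt (S i))
    (hmin : ∀ k, 1 ≤ k → k < i → wsum N wt (S k) < wsum N wt Finset.univ - w')
    (π' : Equiv.Perm (Fin N)) :
    (2 : ℝ) ^ (i - 1) < Dthresh N d wt π' w' :=
  stmt_19_general N I i hi2 hiI d wt hw S hSopt w' hw'0 hmin π'
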